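/- For every integer N ≥ 3 and every real θ with 0 < θ ≤ π/2, there exists a finite set P of unit vectors in ℝ^N with cardinality |P| ≤ √(2πN) · (1/sin(θ/12))^(N−1), such that for every unit vector v ∈ ℝ^N at least N elements p of P satisfy ∠(v,p) ≤ θ/2; that is, every closed spherical cap of angular radius θ/2 in S^{N−1} contains at least N elements of P. -/

import Mathlib

open Real
open scoped Classical

/-- Geodesic (great-circle) distance between unit vectors in `ℝ^N`:
the angle `arccos ⟨u, v⟩ ∈ [0, π]`. -/
noncomputable def geodesicDist {N : ℕ} (u v : EuclideanSpace ℝ (Fin N)) : ℝ :=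
  Real.arccos (inner ℝ u v : ℝ)

/-!
A maximal family of unit vectors with pairwise distances greater than `2 sin (δ / 2)` is a net:
every unit vector is within angle `δ` of one of its points. The disjoint balls of radius
`sin (δ / 2)` around its points lie in the shell `1 - sin (δ / 2) ≤ ‖x‖ ≤ 1 + sin (δ / 2)`, which
bounds its size by comparing volumes. Replacing every net point by `N` unit vectors within angle `ε`
of it, the triangle inequality for angles puts `N` of the new points in every cap of radius
`δ + ε`. For `δ = 49θ/100` and `ε = θ/100`, the bounds `x - x³/6 ≤ sin x ≤ x` turn the volume
bound into the stated one.
-/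

open Metric MeasureTheory Module Finset InnerProductGeometry
open scoped NNReal ENNReal RealInnerProductSpace

theorem Metric.packingNumber_ne_top_of_isCompact {X : Type*} [PseudoEMetricSpace X] {ε : ℝ≥0}
    {A : Set X} (hε : ε ≠ 0) (hA : IsCompact A) : packingNumber ε A ≠ ⊤ := by
  obtain ⟨C, -, hCfin, hC⟩ :=
    exists_finite_isCover_of_isCompact (ε := ε / 2) (by simpa using hε) hA
  refine ne_top_of_le_ne_top (Set.encard_ne_top_iff.mpr hCfin) ?_
  calc packingNumber ε A = packingNumber (2 * (ε / 2)) A := by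
        rw [mul_div_cancel₀ _ two_ne_zero]
    _ ≤ externalCoveringNumber (ε / 2) A := packingNumber_two_mul_le_externalCoveringNumber _ _
    _ ≤ C.encard := hC.externalCoveringNumber_le_encard

section Packing

variable {E : Type*} [NormedAddCommGroup E] [NormedSpace ℝ E] [FiniteDimensional ℝ E]

theorem card_mul_pow_le_of_subset_sphere [MeasurableSpace E] [BorelSpace E] (μ : Measure E)
    [μ.IsAddHaarMeasure] {C : Finset E} {r : ℝ} (hr0 : 0 < r) (hr1 : r ≤ 1)
    (hC : ∀ x ∈ C, ‖x‖ = 1) (hsep : (C : Set E).Pairwise fun x y => 2 * r ≤ dist x y) :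
    #C * r ^ finrank ℝ E ≤ (1 + r) ^ finrank ℝ E - (1 - r) ^ finrank ℝ E := by
  set d := finrank ℝ E
  set v := μ (closedBall (0 : E) 1)
  have hdisj : (C : Set E).PairwiseDisjoint fun q => ball q r := fun q hq q' hq' hne =>
    ball_disjoint_ball (by linarith [hsep hq hq' hne])
  have hcore : Disjoint (closedBall (0 : E) (1 - r)) (⋃ q ∈ C, ball q r) := by
    refine Set.disjoint_left.mpr fun x hx hx' => ?_
    obtain ⟨q, hq, hxq⟩ := Set.mem_iUnion₂.mp hx'
    rw [mem_closedBall_zero_iff] at hx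
    have := norm_sub_norm_le q x
    rw [hC q hq, ← dist_eq_norm, dist_comm] at this
    linarith [mem_ball.mp hxq]
  have hshell : closedBall (0 : E) (1 - r) ∪ ⋃ q ∈ C, ball q r ⊆ closedBall 0 (1 + r) := by
    refine Set.union_subset (closedBall_subset_closedBall (by linarith))
      (Set.iUnion₂_subset fun q hq => ball_subset_closedBall.trans ?_)
    exact closedBall_subset_closedBall' (by rw [dist_zero_right, hC q hq, add_comm])
  have hmeas : (ENNReal.ofReal ((1 - r) ^ d) + #C * ENNReal.ofReal (r ^ d)) * v
      ≤ ENNReal.ofReal ((1 + r) ^ d) * v := by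
    calc (ENNReal.ofReal ((1 - r) ^ d) + #C * ENNReal.ofReal (r ^ d)) * v
        = μ (closedBall (0 : E) (1 - r) ∪ ⋃ q ∈ C, ball q r) := by
          rw [measure_union hcore (C.measurableSet_biUnion fun _ _ => measurableSet_ball),
            measure_biUnion_finset hdisj fun _ _ => measurableSet_ball,
            Measure.addHaar_closedBall' μ _ (by linarith)]
          simp only [Measure.addHaar_ball_of_pos μ _ hr0, sum_const, nsmul_eq_mul,
            ← Measure.addHaar_unitClosedBall_eq_addHaar_unitBall μ]
          ring
      _ ≤ μ (closedBall 0 (1 + r)) := measure_mono hshell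
      _ = ENNReal.ofReal ((1 + r) ^ d) * v := Measure.addHaar_closedBall' μ _ (by linarith)
  rw [ENNReal.mul_le_mul_iff_left (measure_closedBall_pos μ 0 one_pos).ne'
      measure_closedBall_lt_top.ne, ← ENNReal.ofReal_natCast,
    ← ENNReal.ofReal_mul (by positivity),
    ← ENNReal.ofReal_add (pow_nonneg (by linarith) _) (by positivity),
    ENNReal.ofReal_le_ofReal_iff (by positivity)] at hmeas
  linarith

theorem exists_finset_sphere_net {r : ℝ} (hr0 : 0 < r) (hr1 : r ≤ 1) :
    ∃ Q : Finset E, (∀ q ∈ Q, ‖q‖ = 1) ∧ (∀ v : E, ‖v‖ = 1 → ∃ q ∈ Q, ‖v - q‖ ≤ 2 * r) ∧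
      #Q * r ^ finrank ℝ E ≤ (1 + r) ^ finrank ℝ E - (1 - r) ^ finrank ℝ E := by
  borelize E
  set ρ : ℝ≥0 := (2 * r).toNNReal
  have hρ : packingNumber ρ (sphere (0 : E) 1) ≠ ⊤ :=
    packingNumber_ne_top_of_isCompact (by simpa [ρ] using hr0) (isCompact_sphere 0 1)
  have hfin : (maximalSeparatedSet ρ (sphere (0 : E) 1)).Finite :=
    Set.encard_ne_top_iff.mp (encard_maximalSeparatedSet hρ ▸ hρ)
  have hunit : ∀ q ∈ hfin.toFinset, ‖q‖ = 1 := fun q hq =>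
    mem_sphere_zero_iff_norm.mp (maximalSeparatedSet_subset (hfin.mem_toFinset.mp hq))
  refine ⟨hfin.toFinset, hunit, fun v hv => ?_, ?_⟩
  · obtain ⟨q, hq, hvq⟩ := isCover_maximalSeparatedSet hρ (mem_sphere_zero_iff_norm.mpr hv)
    exact ⟨q, hfin.mem_toFinset.mpr hq,
      dist_eq_norm v q ▸ (edist_le_ofReal (by positivity)).mp hvq⟩
  · refine card_mul_pow_le_of_subset_sphere Measure.addHaar hr0 hr1 hunit
      fun x hx y hy hxy => ?_
    have : ENNReal.ofReal (2 * r) < ENNReal.ofReal (dist x y) := edist_dist x y ▸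
      isSeparated_maximalSeparatedSet (hfin.mem_toFinset.mp hx) (hfin.mem_toFinset.mp hy) hxy
    exact (ENNReal.ofReal_lt_ofReal_iff'.mp this).1.le

end Packing

section Sphere

variable {E : Type*} [NormedAddCommGroup E] [InnerProductSpace ℝ E]

theorem exists_norm_eq_one_inner_eq_zero [FiniteDimensional ℝ E] (hE : 2 ≤ finrank ℝ E)
    (q : E) : ∃ w : E, ‖w‖ = 1 ∧ ⟪q, w⟫ = 0 := by
  have hspan : finrank ℝ (ℝ ∙ q) ≤ 1 := by simpa using finrank_span_le_card ({q} : Set E)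
  have hperp : 0 < finrank ℝ (ℝ ∙ q)ᗮ := by
    have := (ℝ ∙ q).finrank_add_finrank_orthogonal
    omega
  obtain ⟨w, hw⟩ := Module.finrank_pos_iff_exists_ne_zero.mp hperp
  refine ⟨‖(w : E)‖⁻¹ • (w : E), norm_smul_inv_norm (by simpa using hw), ?_⟩
  rw [real_inner_smul_right, Submodule.mem_orthogonal_singleton_iff_inner_right.mp w.2, mul_zero]

section Rotation

variable {q w : E} (hq : ‖q‖ = 1) (hw : ‖w‖ = 1) (hqw : ⟪q, w⟫ = 0)
include hq hqw

theorem inner_cos_smul_add_sin_smul (t : ℝ) : ⟪q, cos t • q + sin t • w⟫ = cos t := by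
  rw [inner_add_right, real_inner_smul_right, real_inner_smul_right, real_inner_self_eq_norm_sq,
    hq, hqw]
  ring

include hw in
theorem norm_cos_smul_add_sin_smul (t : ℝ) : ‖cos t • q + sin t • w‖ = 1 := by
  have : ‖cos t • q + sin t • w‖ ^ 2 = 1 := by
    rw [norm_add_sq_real, norm_smul, norm_smul, real_inner_smul_left, real_inner_smul_right, hqw,
      hq, hw, Real.norm_eq_abs, Real.norm_eq_abs]
    nlinarith [sin_sq_add_cos_sq t, sq_abs (cos t), sq_abs (sin t)]
  simpa [abs_eq_self.mpr (norm_nonneg _)] using congrArg Real.sqrt this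

include hw in
theorem angle_cos_smul_add_sin_smul {t : ℝ} (ht0 : 0 ≤ t) (htπ : t ≤ π) :
    angle q (cos t • q + sin t • w) = t := by
  rw [angle, inner_cos_smul_add_sin_smul hq hqw, norm_cos_smul_add_sin_smul hq hw hqw, hq,
    mul_one, div_one, arccos_cos ht0 htπ]

end Rotation

theorem exists_finset_card_eq_forall_angle_le [FiniteDimensional ℝ E] (hE : 2 ≤ finrank ℝ E)
    {q : E} (hq : ‖q‖ = 1) {ε : ℝ} (hε0 : 0 < ε) (hεπ : ε ≤ π) (n : ℕ) :
    ∃ S : Finset E, #S = n ∧ ∀ p ∈ S, ‖p‖ = 1 ∧ angle q p ≤ ε := by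
  obtain ⟨w, hw, hqw⟩ := exists_norm_eq_one_inner_eq_zero hE q
  set t : ℕ → ℝ := fun k => ε / (k + 1)
  have ht0 (k : ℕ) : 0 ≤ t k := by positivity
  have htε (k : ℕ) : t k ≤ ε := div_le_self hε0.le (by simp)
  set c : ℕ → E := fun k => cos (t k) • q + sin (t k) • w
  have hangle (k : ℕ) : angle q (c k) = t k :=
    angle_cos_smul_add_sin_smul hq hw hqw (ht0 k) ((htε k).trans hεπ)
  have hc : Function.Injective c := fun j k hjk => by
    have : t j = t k := by rw [← hangle, ← hangle, hjk]
    simpa using inv_inj.mp (mul_left_cancel₀ hε0.ne' this)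
  refine ⟨(range n).image c, by rw [card_image_of_injective _ hc, card_range], ?_⟩
  simp only [mem_image, mem_range, forall_exists_index, and_imp]
  rintro _ k - rfl
  exact ⟨norm_cos_smul_add_sin_smul hq hw hqw _, hangle k ▸ htε k⟩

theorem angle_le_of_norm_sub_le {u v : E} (hu : ‖u‖ = 1) (hv : ‖v‖ = 1) {δ : ℝ} (hδ0 : 0 ≤ δ)
    (h : ‖u - v‖ ≤ 2 * sin (δ / 2)) : angle u v ≤ δ := by
  have hcos : ‖u - v‖ ^ 2 = 2 - 2 * cos (angle u v) := by
    rw [norm_sub_sq_real, hu, hv, inner_eq_cos_angle_of_norm_eq_one hu hv]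
    ring
  have hsq : ‖u - v‖ ^ 2 ≤ 2 - 2 * cos δ := by
    calc ‖u - v‖ ^ 2 ≤ (2 * sin (δ / 2)) ^ 2 := pow_le_pow_left₀ (norm_nonneg _) h 2
      _ = 2 - 2 * cos δ := by
        rw [mul_pow, sin_sq_eq_half_sub, mul_div_cancel₀ _ two_ne_zero]; ring
  by_contra! hlt
  linarith [cos_lt_cos_of_nonneg_of_le_pi hδ0 (angle_le_pi u v) hlt]

theorem exists_finset_forall_le_card_filter_angle_le [FiniteDimensional ℝ E]
    (hE : 2 ≤ finrank ℝ E) {δ ε : ℝ} (hδ0 : 0 < δ) (hδπ : δ ≤ π) (hε0 : 0 < ε) (hεπ : ε ≤ π)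
    (n : ℕ) :
    ∃ P : Finset E, (∀ p ∈ P, ‖p‖ = 1) ∧
      #P * sin (δ / 2) ^ finrank ℝ E ≤
        n * ((1 + sin (δ / 2)) ^ finrank ℝ E - (1 - sin (δ / 2)) ^ finrank ℝ E) ∧
      ∀ v : E, ‖v‖ = 1 → n ≤ #{p ∈ P | angle v p ≤ δ + ε} := by
  have hr0 : 0 < sin (δ / 2) := sin_pos_of_pos_of_lt_pi (by positivity) (by linarith [pi_pos])
  obtain ⟨Q, hQunit, hQnet, hQcard⟩ := exists_finset_sphere_net (E := E) hr0 (sin_le_one _)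
  choose! S hScard hS using fun q (hq : ‖q‖ = 1) =>
    exists_finset_card_eq_forall_angle_le hE hq hε0 hεπ n
  refine ⟨Q.biUnion S, ?_, ?_, fun v hv => ?_⟩
  · simp only [mem_biUnion]
    rintro p ⟨q, hq, hp⟩
    exact (hS q (hQunit q hq) p hp).1
  · have hPQ : #(Q.biUnion S) ≤ n * #Q := by
      calc #(Q.biUnion S) ≤ ∑ q ∈ Q, #(S q) := card_biUnion_le
        _ = n * #Q := by
          rw [sum_congr rfl fun q hq => hScard q (hQunit q hq), sum_const, smul_eq_mul, mul_comm]
    calc (#(Q.biUnion S) : ℝ) * sin (δ / 2) ^ finrank ℝ E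
        ≤ (n * #Q) * sin (δ / 2) ^ finrank ℝ E := by gcongr; exact_mod_cast hPQ
      _ ≤ _ := by rw [mul_assoc]; gcongr
  · obtain ⟨q, hq, hchord⟩ := hQnet v hv
    have hvq : angle v q ≤ δ := angle_le_of_norm_sub_le hv (hQunit q hq) hδ0.le hchord
    rw [← hScard q (hQunit q hq)]
    refine card_le_card fun p hp => mem_filter.mpr ⟨mem_biUnion.mpr ⟨q, hq, hp⟩, ?_⟩
    linarith [angle_le_angle_add_angle v q p, (hS q (hQunit q hq) p hp).2]

end Sphere

theorem pow_sub_pow_le_natCast_mul_sub_mul_pow {R : Type*} [CommRing R] [LinearOrder R]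
    [IsStrictOrderedRing R] {a b : R} (hb : 0 ≤ b) (hab : b ≤ a) (n : ℕ) :
    a ^ n - b ^ n ≤ n * (a - b) * a ^ (n - 1) := by
  calc a ^ n - b ^ n = (∑ i ∈ range n, a ^ i * b ^ (n - 1 - i)) * (a - b) :=
        (geom_sum₂_mul a b n).symm
    _ ≤ (∑ _i ∈ range n, a ^ (n - 1)) * (a - b) := by
      gcongr with i hi
      calc a ^ i * b ^ (n - 1 - i) ≤ a ^ i * a ^ (n - 1 - i) := by
            gcongr; exact pow_nonneg (hb.trans hab) i
        _ = a ^ (n - 1) := by rw [← pow_add]; congr 1; have := mem_range.mp hi; omega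
    _ = n * (a - b) * a ^ (n - 1) := by rw [sum_const, card_range, nsmul_eq_mul]; ring

theorem sin_div_twelve_mul_one_add_le {θ : ℝ} (hθ : 0 < θ) (hθ2 : θ ≤ π / 2) :
    41 * sin (θ / 12) * (1 + sin (49 * θ / 200)) ≤ 20 * sin (49 * θ / 200) := by
  have hθ2' : θ ≤ 1.5708 := by linarith [pi_lt_d6]
  have hs : sin (θ / 12) ≤ θ / 12 := (sin_lt (by positivity)).le
  have hx : sin (49 * θ / 200) ≤ 49 * θ / 200 := (sin_lt (by positivity)).le
  have hx' : 49 * θ / 200 - (49 * θ / 200) ^ 3 / 6 ≤ sin (49 * θ / 200) :=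
    sin_ge_sub_cube (by positivity)
  have hs0 : 0 ≤ sin (θ / 12) := sin_nonneg_of_nonneg_of_le_pi (by positivity) (by linarith)
  calc 41 * sin (θ / 12) * (1 + sin (49 * θ / 200)) ≤ 41 * (θ / 12) * (1 + 49 * θ / 200) := by
        gcongr; linarith [neg_one_le_sin (49 * θ / 200)]
    _ ≤ 20 * (49 * θ / 200 - (49 * θ / 200) ^ 3 / 6) := by nlinarith
    _ ≤ 20 * sin (49 * θ / 200) := by gcongr

theorem two_mul_cube_le_pi_mul_pow {N : ℕ} (hN : 3 ≤ N) :
    2 * (N : ℝ) ^ 3 ≤ π * (1681 / 400) ^ (N - 1) := by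
  induction N, hN using Nat.le_induction with
  | base => norm_num; linarith [pi_gt_d2]
  | succ m hm ih =>
    have hm' : (3 : ℝ) ≤ m := by exact_mod_cast hm
    have hm1 : 3 * (m : ℝ) ≤ m ^ 2 := by nlinarith
    have hm2 : 3 * (m : ℝ) ^ 2 ≤ m ^ 3 := by nlinarith
    have hstep : 2 * ((m : ℝ) + 1) ^ 3 ≤ 1681 / 400 * (2 * (m : ℝ) ^ 3) := by nlinarith
    have hpow : ((1681 : ℝ) / 400) ^ (m + 1 - 1) = 1681 / 400 * (1681 / 400) ^ (m - 1) := by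
      rw [Nat.add_sub_cancel, ← pow_succ']; congr 1; omega
    rw [hpow]
    push_cast
    linarith

theorem two_mul_sq_mul_pow_le_sqrt {N : ℕ} (hN : 3 ≤ N) :
    2 * (N : ℝ) ^ 2 * (20 / 41) ^ (N - 1) ≤ √(2 * π * N) := by
  refine le_sqrt_of_sq_le ?_
  have h := two_mul_cube_le_pi_mul_pow hN
  have hpow : (((20 : ℝ) / 41) ^ (N - 1)) ^ 2 * (1681 / 400) ^ (N - 1) = 1 := by
    rw [← pow_mul, mul_comm (N - 1) 2, pow_mul, ← mul_pow]; norm_num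
  calc (2 * (N : ℝ) ^ 2 * (20 / 41) ^ (N - 1)) ^ 2
      = 2 * N * (2 * N ^ 3) * ((20 / 41) ^ (N - 1)) ^ 2 := by ring
    _ ≤ 2 * N * (π * (1681 / 400) ^ (N - 1)) * ((20 / 41) ^ (N - 1)) ^ 2 := by gcongr
    _ = 2 * π * N := by linear_combination (2 * π * N) * hpow

theorem le_sqrt_mul_one_div_pow_of_mul_pow_le {N : ℕ} (hN : 3 ≤ N) {s r x : ℝ} (hs : 0 < s)
    (hr0 : 0 < r) (hr1 : r ≤ 1) (hsr : 41 * s * (1 + r) ≤ 20 * r)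
    (hx : x * r ^ N ≤ N * ((1 + r) ^ N - (1 - r) ^ N)) :
    x ≤ √(2 * π * N) * (1 / s) ^ (N - 1) := by
  set c := 2 * (N : ℝ) ^ 2 * (20 / 41) ^ (N - 1)
  have hdiff := pow_sub_pow_le_natCast_mul_sub_mul_pow (sub_nonneg.mpr hr1)
    (by linarith : 1 - r ≤ 1 + r) N
  rw [show (1 + r) - (1 - r) = 2 * r by ring] at hdiff
  have hgrowth : 1 + r ≤ 20 / 41 * (1 / s) * r := by
    rw [show 20 / 41 * (1 / s) * r = 20 * r / (41 * s) by ring, le_div_iff₀ (by positivity)]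
    linarith
  have hrN : r ^ N = r * r ^ (N - 1) := by rw [← pow_succ']; congr 1; omega
  have hxc : x * r ^ N ≤ c * (1 / s) ^ (N - 1) * r ^ N := by
    calc x * r ^ N ≤ N * (N * (2 * r) * (1 + r) ^ (N - 1)) := hx.trans (by gcongr)
      _ ≤ N * (N * (2 * r) * (20 / 41 * (1 / s) * r) ^ (N - 1)) := by gcongr
      _ = c * (1 / s) ^ (N - 1) * r ^ N := by rw [hrN, mul_pow, mul_pow]; ring
  calc x ≤ c * (1 / s) ^ (N - 1) := le_of_mul_le_mul_right hxc (by positivity)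
    _ ≤ √(2 * π * N) * (1 / s) ^ (N - 1) := by gcongr; exact two_mul_sq_mul_pow_le_sqrt hN

theorem geodesicDist_eq_angle {N : ℕ} {u v : EuclideanSpace ℝ (Fin N)} (hu : ‖u‖ = 1)
    (hv : ‖v‖ = 1) : geodesicDist u v = angle u v := by
  rw [geodesicDist, angle, hu, hv, mul_one, div_one]

theorem exists_directions_striking_every_cap (N : ℕ) (hN : 3 ≤ N)
    (θ : ℝ) (hθ : 0 < θ) (hθ2 : θ ≤ π / 2) :
    ∃ P : Finset (EuclideanSpace ℝ (Fin N)),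
      (∀ p ∈ P, ‖p‖ = 1) ∧
      (P.card : ℝ) ≤ Real.sqrt (2 * π * N) * (1 / Real.sin (θ / 12)) ^ (N - 1) ∧
      ∀ v : EuclideanSpace ℝ (Fin N), ‖v‖ = 1 →
        N ≤ (P.filter (fun p => geodesicDist v p ≤ θ / 2)).card := by
  have hπ := pi_gt_three
  obtain ⟨P, hunit, hcard, hcover⟩ := exists_finset_forall_le_card_filter_angle_le
    (E := EuclideanSpace ℝ (Fin N)) (by rw [finrank_euclideanSpace_fin]; omega)
    (δ := 49 * θ / 100) (ε := θ / 100)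
    (by positivity) (by linarith) (by positivity) (by linarith) N
  rw [finrank_euclideanSpace_fin, show 49 * θ / 100 / 2 = 49 * θ / 200 by ring] at hcard
  refine ⟨P, hunit, le_sqrt_mul_one_div_pow_of_mul_pow_le hN
    (sin_pos_of_pos_of_lt_pi (by positivity) (by linarith))
    (sin_pos_of_pos_of_lt_pi (by positivity) (by linarith)) (sin_le_one _)
    (sin_div_twelve_mul_one_add_le hθ hθ2) hcard, fun v hv => ?_⟩
  calc N ≤ #{p ∈ P | angle v p ≤ 49 * θ / 100 + θ / 100} := hcover v hv
    _ = #{p ∈ P | geodesicDist v p ≤ θ / 2} := by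
      refine congrArg card (filter_congr fun p hp => ?_)
      rw [geodesicDist_eq_angle hv (hunit p hp), show 49 * θ / 100 + θ / 100 = θ / 2 by ring]
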